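/- For every term type δ, if the term x N₁…Nₖ (a variable applied to strongly normalising arguments, the whole term being strongly normalising) is strongly normalising, then x N₁…Nₖ belongs to the interpretation ⟦δ⟧. In particular, every variable x belongs to ⟦δ⟧ for every term type δ. -/
import Mathlib


/-- λμ-terms: variables, abstraction, application, and μ-abstraction
    `mu a b M` represents μα.[β]M (a = α, b = β). -/
inductive Trm : Type
  | var : ℕ → Trm
  | lam : ℕ → Trm → Trm
  | app : Trm → Trm → Trm
  | mu  : ℕ → ℕ → Trm → Trm
deriving DecidableEq

/-- Term substitution M[N/x] (Barendregt convention: no capture). -/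
def subst : Trm → ℕ → Trm → Trm
  | .var y, x, N => if y = x then N else .var y
  | .lam y M, x, N => .lam y (subst M x N)
  | .app M P, x, N => .app (subst M x N) (subst P x N)
  | .mu a b M, x, N => .mu a b (subst M x N)

/-- Structural substitution M{α ⇐ N}: every named subterm [α]P becomes [α]PN. -/
def ssub : Trm → ℕ → Trm → Trm
  | .var y, _, _ => .var y
  | .lam y M, a, N => .lam y (ssub M a N)
  | .app M P, a, N => .app (ssub M a N) (ssub P a N)
  | .mu b c M, a, N =>
      .mu b c (if c = a then .app (ssub M a N) N else ssub M a N)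

/-- Iterated structural substitution M{α ⇐ N₁}…{α ⇐ Nₘ}. -/
def ssubs (a : ℕ) (M : Trm) (Ns : List Trm) : Trm :=
  Ns.foldl (fun T N => ssub T a N) M

/-- Application of a term to a stack of terms: M L₁ … Lₖ. -/
def appList (M : Trm) (L : List Trm) : Trm := L.foldl .app M

/-- One-step reduction: logical (β) and structural (μ) rules, compatible closure. -/
inductive Red : Trm → Trm → Prop
  | beta (x : ℕ) (M N : Trm) : Red (.app (.lam x M) N) (subst M x N)
  | mu (a b : ℕ) (M N : Trm) : Red (.app (.mu a b M) N) (ssub (.mu a b M) a N)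
  | appL {M M' : Trm} (N : Trm) : Red M M' → Red (.app M N) (.app M' N)
  | appR (M : Trm) {N N' : Trm} : Red N N' → Red (.app M N) (.app M N')
  | lam (x : ℕ) {M M' : Trm} : Red M M' → Red (.lam x M) (.lam x M')
  | muC (a b : ℕ) {M M' : Trm} : Red M M' → Red (.mu a b M) (.mu a b M')

/-- Strong normalisation: no infinite reduction sequence from M. -/
def SN (M : Trm) : Prop := Acc (fun p q => Red q p) M

/-- Stacks of strongly normalising terms. -/
def SNs (L : List Trm) : Prop := ∀ P ∈ L, SN P

mutual
/-- Term types δ ::= ν | ω→ν | κ→ν | δ∧δ. -/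
inductive TyD : Type
  | nu : TyD
  | arrOmega : TyD
  | arr : TyC → TyD
  | inter : TyD → TyD → TyD
/-- Continuation-stack types κ ::= δ×ω | δ×κ | κ∧κ. -/
inductive TyC : Type
  | prodOmega : TyD → TyC
  | prod : TyD → TyC → TyC
  | inter : TyC → TyC → TyC
end

mutual
/-- The subtyping preorder on term types. -/
inductive LeD : TyD → TyD → Prop
  | refl (d) : LeD d d
  | trans {d1 d2 d3} : LeD d1 d2 → LeD d2 d3 → LeD d1 d3
  | interL (d1 d2) : LeD (.inter d1 d2) d1
  | interR (d1 d2) : LeD (.inter d1 d2) d2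
  | glb {d d1 d2} : LeD d d1 → LeD d d2 → LeD d (.inter d1 d2)
  | nuOmega : LeD .nu .arrOmega
  | omegaNu : LeD .arrOmega .nu
  | arr {k1 k2} : LeC k2 k1 → LeD (.arr k1) (.arr k2)
/-- The subtyping preorder on continuation-stack types. -/
inductive LeC : TyC → TyC → Prop
  | refl (k) : LeC k k
  | trans {k1 k2 k3} : LeC k1 k2 → LeC k2 k3 → LeC k1 k3
  | interL (k1 k2) : LeC (.inter k1 k2) k1
  | interR (k1 k2) : LeC (.inter k1 k2) k2
  | glb {k k1 k2} : LeC k k1 → LeC k k2 → LeC k (.inter k1 k2)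
  | drop (d1 d2) : LeC (.prod d1 (.prodOmega d2)) (.prodOmega d1)
  | distOmega (d1 d2 k) :
      LeC (.inter (.prodOmega d1) (.prod d2 k)) (.prod (.inter d1 d2) k)
  | dist (d1 d2 k1 k2) :
      LeC (.inter (.prod d1 k1) (.prod d2 k2))
          (.prod (.inter d1 d2) (.inter k1 k2))
  | monoOmega {d1 d2} : LeD d1 d2 → LeC (.prodOmega d1) (.prodOmega d2)
  | mono {d1 d2 k1 k2} : LeD d1 d2 → LeC k1 k2 → LeC (.prod d1 k1) (.prod d2 k2)
end

mutual
/-- Interpretation of term types as sets of terms. -/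
def semD : TyD → Set Trm
  | .nu => {M | SN M}
  | .arrOmega => {M | SN M}
  | .arr k => {M | ∀ L ∈ semC k, SN (appList M L)}
  | .inter d1 d2 => semD d1 ∩ semD d2
/-- Interpretation of continuation-stack types as sets of stacks. -/
def semC : TyC → Set (List Trm)
  | .prodOmega d => {l | ∃ N L, l = N :: L ∧ N ∈ semD d ∧ SNs L}
  | .prod d k => {l | ∃ N L, l = N :: L ∧ N ∈ semD d ∧ L ∈ semC k}
  | .inter k1 k2 => semC k1 ∩ semC k2
end

/-- Minimal length ‖κ‖ of stacks in ⟦κ⟧. -/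
def lenC : TyC → ℕ
  | .prodOmega _ => 1
  | .prod _ k => 1 + lenC k
  | .inter k1 k2 => max (lenC k1) (lenC k2)

abbrev Ctx := ℕ → Option TyD
abbrev NCtx := ℕ → Option TyC

/-- The intersection type assignment system for λμ.
    In the (abs)/(app) rules κ may be a continuation type or ω, hence two forms. -/
inductive Typ : Ctx → Trm → TyD → NCtx → Prop
  | ax {Γ : Ctx} {x δ} (Δ : NCtx) : Γ x = some δ → Typ Γ (.var x) δ Δ
  | abs {Γ x δ κ M Δ} : Typ (Function.update Γ x (some δ)) M (.arr κ) Δ →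
      Typ Γ (.lam x M) (.arr (.prod δ κ)) Δ
  | absOmega {Γ x δ M Δ} : Typ (Function.update Γ x (some δ)) M .arrOmega Δ →
      Typ Γ (.lam x M) (.arr (.prodOmega δ)) Δ
  | app {Γ M N δ κ Δ} : Typ Γ M (.arr (.prod δ κ)) Δ → Typ Γ N δ Δ →
      Typ Γ (.app M N) (.arr κ) Δ
  | appOmega {Γ M N δ Δ} : Typ Γ M (.arr (.prodOmega δ)) Δ → Typ Γ N δ Δ →
      Typ Γ (.app M N) .arrOmega Δ
  | muNe {Γ M a b κ κ' Δ} : a ≠ b →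
      Typ Γ M (.arr κ') (Function.update (Function.update Δ b (some κ')) a (some κ)) →
      Typ Γ (.mu a b M) (.arr κ) (Function.update Δ b (some κ'))
  | muEq {Γ M a κ Δ} : Typ Γ M (.arr κ) (Function.update Δ a (some κ)) →
      Typ Γ (.mu a a M) (.arr κ) Δ
  | sub {Γ M δ δ' Δ} : Typ Γ M δ Δ → LeD δ δ' → Typ Γ M δ' Δ
  | inter {Γ M δ1 δ2 Δ} : Typ Γ M δ1 Δ → Typ Γ M δ2 Δ → Typ Γ M (.inter δ1 δ2) Δ

/-- Free variables. -/
def fv : Trm → Set ℕ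
  | .var x => {x}
  | .lam x M => fv M \ {x}
  | .app M N => fv M ∪ fv N
  | .mu _ _ M => fv M

/-- Free names. -/
def fn : Trm → Set ℕ
  | .var _ => ∅
  | .lam _ M => fn M
  | .app M N => fn M ∪ fn N
  | .mu a b M => (fn M ∪ {b}) \ {a}

/-- Bound variables. -/
def bv : Trm → Set ℕ
  | .var _ => ∅
  | .lam x M => {x} ∪ bv M
  | .app M N => bv M ∪ bv N
  | .mu _ _ M => bv M

/-- Bound names. -/
def bn : Trm → Set ℕ
  | .var _ => ∅
  | .lam _ M => bn M
  | .app M N => bn M ∪ bn N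
  | .mu a _ M => {a} ∪ bn M

/-- Γ' ≤ Γ on variable contexts. -/
def CtxLe (Γ' Γ : Ctx) : Prop :=
  ∀ x δ, Γ x = some δ → ∃ δ', Γ' x = some δ' ∧ LeD δ' δ

/-- Δ' ≤ Δ on name contexts. -/
def NCtxLe (Δ' Δ : NCtx) : Prop :=
  ∀ a κ, Δ a = some κ → ∃ κ', Δ' a = some κ' ∧ LeC κ' κ

/-- Application of a parallel substitution (ξv on variables, ξn on names;
    default ξv x = var x / ξn a = [] encodes "not in the domain"). -/
def psub (ξv : ℕ → Trm) (ξn : ℕ → List Trm) : Trm → Trm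
  | .var x => ξv x
  | .lam x M => .lam x (psub ξv ξn M)
  | .app M N => .app (psub ξv ξn M) (psub ξv ξn N)
  | .mu a b M => .mu a b (appList (psub ξv ξn M) (ξn b))

/-- Normal forms: N ::= x N₁…Nₖ | λx.N | μα.[β]N. -/
inductive Nf : Trm → Prop
  | varApp (x : ℕ) (Ns : List Trm) : (∀ N ∈ Ns, Nf N) → Nf (appList (.var x) Ns)
  | lam (x : ℕ) {M} : Nf M → Nf (.lam x M)
  | mu (a b : ℕ) {M} : Nf M → Nf (.mu a b M)

/-- Simple types (logical formulas) A ::= φ | A → B. -/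
inductive SType : Type
  | base : ℕ → SType
  | arrow : SType → SType → SType

abbrev SCtx := ℕ → Option SType

/-- Parigot's simply-typed λμ-calculus (propositional fragment). -/
inductive STyp : SCtx → Trm → SType → SCtx → Prop
  | ax {Γ : SCtx} {x A} (Δ : SCtx) : Γ x = some A → STyp Γ (.var x) A Δ
  | arrI {Γ x A B M Δ} : STyp (Function.update Γ x (some A)) M B Δ →
      STyp Γ (.lam x M) (.arrow A B) Δ
  | arrE {Γ M N A B Δ} : STyp Γ M (.arrow A B) Δ → STyp Γ N A Δ →
      STyp Γ (.app M N) B Δ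
  | mu1 {Γ M a A Δ} : STyp Γ M A (Function.update Δ a (some A)) →
      STyp Γ (.mu a a M) A Δ
  | mu2 {Γ M a b A B Δ} : a ≠ b →
      STyp Γ M B (Function.update (Function.update Δ b (some B)) a (some A)) →
      STyp Γ (.mu a b M) A (Function.update Δ b (some B))

/-- Translation of formulas to continuation-stack types. -/
def transC : SType → TyC
  | .base _ => .prodOmega .nu
  | .arrow A B => .prod (.arr (transC A)) (transC B)

/-- Translation of formulas to term types. -/
def transD (A : SType) : TyD := .arr (transC A)

/-! ### Auxiliary lemmas -/

lemma appList_append (M : Trm) (L1 L2 : List Trm) :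
    appList M (L1 ++ L2) = appList (appList M L1) L2 :=
  List.foldl_append ..

lemma appList_cons (M N : Trm) (L : List Trm) :
    appList M (N :: L) = appList (.app M N) L := rfl

/-- One-step reduction of a single element of a list. -/
inductive ListRed : List Trm → List Trm → Prop
  | head {N N' : Trm} (L : List Trm) : Red N N' → ListRed (N :: L) (N' :: L)
  | tail (N : Trm) {L L' : List Trm} : ListRed L L' → ListRed (N :: L) (N :: L')

lemma red_appList_head {M M' : Trm} (h : Red M M') :
    ∀ L : List Trm, Red (appList M L) (appList M' L) := by
  intro L
  induction L generalizing M M' with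
  | nil => exact h
  | cons N L ih => exact ih (Red.appL N h)

lemma red_appList_of_listRed {L L' : List Trm} (h : ListRed L L') (M : Trm) :
    Red (appList M L) (appList M L') := by
  induction h generalizing M with
  | head L hr => exact red_appList_head (Red.appR M hr) L
  | tail N _ ih => exact ih (.app M N)

lemma sn_pull {g : Trm → Trm} (hg : ∀ a b, Red a b → Red (g a) (g b))
    {M : Trm} (h : SN (g M)) : SN M := by
  have : ∀ P, SN P → ∀ M, P = g M → SN M := by
    intro P hP
    induction hP with
    | intro P _ ih =>
      rintro M rfl
      exact Acc.intro _ fun M' hM' => ih (g M') (hg M M' hM') M' rfl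
  exact this (g M) h M rfl

lemma acc_listRed : ∀ L : List Trm, (∀ N ∈ L, SN N) →
    Acc (fun p q => ListRed q p) L := by
  intro L hL
  induction L with
  | nil => exact Acc.intro _ fun L' h => nomatch h
  | cons N L ih =>
    have hN : SN N := hL N (List.mem_cons_self ..)
    have hT : Acc (fun p q => ListRed q p) L :=
      ih (fun P hP => hL P (List.mem_cons_of_mem _ hP))
    clear ih hL
    induction hN generalizing L with
    | intro N _ ihN =>
      induction hT with
      | intro L hLacc ihL =>
        refine Acc.intro _ fun L' h => ?_
        cases h with
        | head _ hr => exact ihN _ hr _ (Acc.intro _ hLacc)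
        | tail _ hr => exact ihL _ hr
  
lemma appList_var_shape (x : ℕ) (L : List Trm) :
    (∃ y, appList (.var x) L = .var y) ∨ ∃ A B, appList (.var x) L = .app A B := by
  induction L using List.reverseRecOn with
  | nil => exact Or.inl ⟨x, rfl⟩
  | append_singleton L N _ =>
    right
    exact ⟨_, _, by rw [appList_append]; rfl⟩

lemma listRed_append_right {L L' : List Trm} (h : ListRed L L') (K : List Trm) :
    ListRed (L ++ K) (L' ++ K) := by
  induction h with
  | head L hr => exact ListRed.head _ hr
  | tail N _ ih => exact ListRed.tail N ih

lemma listRed_middle {N N' : Trm} (h : Red N N') (L1 L2 : List Trm) :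
    ListRed (L1 ++ N :: L2) (L1 ++ N' :: L2) := by
  induction L1 with
  | nil => exact ListRed.head _ h
  | cons P L1 ih => exact ListRed.tail P ih

lemma red_appList_var_inv (x : ℕ) :
    ∀ L P, Red (appList (.var x) L) P →
      ∃ L', ListRed L L' ∧ P = appList (.var x) L' := by
  intro L
  induction L using List.reverseRecOn with
  | nil => intro P h; cases h
  | append_singleton L N ih =>
    intro P h
    rw [appList_append] at h
    generalize hQ : appList (.var x) L = Q at h ih
    cases h with
    | beta y M N =>
      rcases appList_var_shape x L with ⟨y', hy⟩ | ⟨A, B, hy⟩ <;> simp_all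
    | mu a b M N =>
      rcases appList_var_shape x L with ⟨y', hy⟩ | ⟨A, B, hy⟩ <;> simp_all
    | appL _ hr =>
      obtain ⟨L', hLR, rfl⟩ := ih _ hr
      exact ⟨L' ++ [N], listRed_append_right hLR [N], by rw [appList_append]; rfl⟩
    | appR _ hr =>
      rename_i N'
      exact ⟨L ++ [N'], listRed_middle hr L [], by rw [appList_append, hQ]; rfl⟩

lemma sn_appList_var (x : ℕ) {L : List Trm} (hL : ∀ N ∈ L, SN N) :
    SN (appList (.var x) L) := by
  have h := acc_listRed L hL
  clear hL
  induction h with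
  | intro L _ ih =>
    refine Acc.intro _ fun P hP => ?_
    obtain ⟨L', hLR, rfl⟩ := red_appList_var_inv x L P hP
    exact ih L' hLR

lemma sn_var (x : ℕ) : SN (Trm.var x) :=
  sn_appList_var x (L := []) (by simp)

lemma sn_elems {x : ℕ} {L : List Trm} (h : SN (appList (.var x) L)) :
    ∀ N ∈ L, SN N := by
  intro N hN
  obtain ⟨L1, L2, rfl⟩ := List.append_of_mem hN
  refine sn_pull (g := fun N => appList (.var x) (L1 ++ N :: L2)) ?_ h
  intro a b hab
  exact red_appList_of_listRed (listRed_middle hab L1 L2) _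

mutual

theorem memD_aux : ∀ d : TyD, ∀ x : ℕ, ∀ Ns : List Trm,
    (∀ N ∈ Ns, SN N) → appList (.var x) Ns ∈ semD d
  | .nu, x, Ns, h => sn_appList_var x h
  | .arrOmega, x, Ns, h => sn_appList_var x h
  | .arr k, x, Ns, h => by
    intro L hL
    rw [← appList_append]
    refine sn_appList_var x ?_
    intro N hN
    rcases List.mem_append.mp hN with hN | hN
    · exact h N hN
    · exact snsC_aux k L hL N hN
  | .inter d1 d2, x, Ns, h => ⟨memD_aux d1 x Ns h, memD_aux d2 x Ns h⟩

theorem snsC_aux : ∀ k : TyC, ∀ L ∈ semC k, ∀ N ∈ L, SN N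
  | .prodOmega d, L, hL => by
    obtain ⟨N, L', rfl, hN, hL'⟩ := hL
    intro P hP
    rcases List.mem_cons.mp hP with rfl | hP
    · exact snD_aux d _ hN
    · exact hL' P hP
  | .prod d k, L, hL => by
    obtain ⟨N, L', rfl, hN, hL'⟩ := hL
    intro P hP
    rcases List.mem_cons.mp hP with rfl | hP
    · exact snD_aux d _ hN
    · exact snsC_aux k L' hL' P hP
  | .inter k1 k2, L, hL => snsC_aux k1 L hL.1

theorem snD_aux : ∀ d : TyD, ∀ M ∈ semD d, SN M
  | .nu, M, hM => hM
  | .arrOmega, M, hM => hM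
  | .arr k, M, hM => by
    have hrep := replC_aux k (lenC k) le_rfl
    have := hM _ hrep
    refine sn_pull (g := fun M => appList M (List.replicate (lenC k) (.var 0))) ?_ this
    intro a b hab
    exact red_appList_head hab _
  | .inter d1 d2, M, hM => snD_aux d1 M hM.1

theorem replC_aux : ∀ k : TyC, ∀ n, lenC k ≤ n →
    (List.replicate n (Trm.var 0)) ∈ semC k
  | .prodOmega d, n, hn => by
    have h1 : 1 ≤ n := hn
    obtain ⟨m, rfl⟩ : ∃ m, n = m + 1 := ⟨n - 1, by omega⟩
    rw [List.replicate_succ]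
    exact ⟨_, _, rfl, memD_aux d 0 [] (by simp), fun P hP => by
      rw [List.eq_of_mem_replicate hP]; exact sn_var 0⟩
  | .prod d k, n, hn => by
    have h1 : 1 + lenC k ≤ n := hn
    obtain ⟨m, rfl⟩ : ∃ m, n = m + 1 := ⟨n - 1, by omega⟩
    rw [List.replicate_succ]
    exact ⟨_, _, rfl, memD_aux d 0 [] (by simp),
      replC_aux k m (by omega)⟩
  | .inter k1 k2, n, hn =>
    ⟨replC_aux k1 n (le_trans (le_max_left _ _) hn),
     replC_aux k2 n (le_trans (le_max_right _ _) hn)⟩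

end

/-- A strongly normalising term x N₁…Nₖ belongs to every ⟦δ⟧;
    in particular every variable belongs to every ⟦δ⟧. -/
theorem sn_head_in_sem :
    (∀ δ : TyD, ∀ x : ℕ, ∀ Ns : List Trm,
      SN (appList (.var x) Ns) → appList (.var x) Ns ∈ semD δ) ∧
    (∀ δ : TyD, ∀ x : ℕ, Trm.var x ∈ semD δ) := by
  constructor
  · intro δ x Ns h
    exact memD_aux δ x Ns (sn_elems h)
  · intro δ x
    exact memD_aux δ x [] (by simp)
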